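/- Assume char F ≠ 2, 3 and let S = {(a_1,a_2,a_3) ∈ F^3 : a_1+a_2+a_3 = 0} ⊆ W = F^3. The Lie subalgebra S^σ[G] = span{r g : r ∈ S, g ∈ G} of W^σ[G] decomposes as the direct sum of Sg_0 = {r g_0 : r ∈ S}, which is the center of S^σ[G] and has dimension 2, and S^σ[G^×] = span{r g_i : r ∈ S, i ∈ I}, which is a simple Lie subalgebra of dimension 14 (of type G_2). -/

import Mathlib

/-!
Every `σ_{g,h}` maps `S × S` into `S` and `σ_{g,g} = 0`, so the `G`-grading makes `S^σ[G^×]` a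
subalgebra; `σ_{0,j} = σ_{i,0} = 0` makes `Sg₀` central, and bracketing with `e g_{k+1}`,
`e = (1,-1,0)`, detects the `g_k`-component, so the centre is no larger. For `i, j ∈ I` the twist
`σ_{i,j}` depends only on `j - i mod 7`.

Simplicity. On every component, `(ad e g_k)²` acts by a matrix `N` with `N² + 4N = -3` or `0`,
according to the offset of the component from `k`. Hence `(ad e g_k)⁴ + 4 (ad e g_k)²` is `-3`
times a coordinate projection, and three of them (`k = i-1, i-2, i-3`) cut a nonzero element of
an ideal `J` down to `r g_i ∈ J`, `r ≠ 0`. Bracketing with `S g_j` for a suitable `j` puts a whole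
`S g_t` into `J` (two `2 × 2` determinants in `r` cannot both vanish when `char F ≠ 3`), and since
`σ_{j,t}(S, S) = S` this spreads to every `S g_{t'}`.
-/

namespace GGA

noncomputable section

variable (F : Type*) [Field F]

/-- The labelling `g_0, …, g_7` of the eight elements of `G = (ℤ/2ℤ)³`:
`g_0=(0,0,0), g_1=(1,0,0), g_2=(0,1,0), g_3=(0,0,1), g_4=(1,1,0), g_5=(0,1,1),
g_6=(1,1,1), g_7=(1,0,1)`. -/
def lab : Fin 8 → Fin 3 → ZMod 2 :=
  ![![0, 0, 0], ![1, 0, 0], ![0, 1, 0], ![0, 0, 1],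
    ![1, 1, 0], ![0, 1, 1], ![1, 1, 1], ![1, 0, 1]]

/-- `star i j` is the unique index `k ∈ {0,…,7}` with `g_i + g_j = g_k`. -/
def star (i j : Fin 8) : Fin 8 := Function.invFun lab (lab i + lab j)

/-- The formula for `σ_{i,i+1}(r,s)` on `W = F³`. -/
def w1 (r s : Fin 3 → F) : Fin 3 → F :=
  ![-(r 1 * s 0) - r 2 * s 2, -(r 1 * s 2) - r 2 * s 0, r 0 * s 1]

/-- The formula for `σ_{i,i+2}(r,s)` on `W = F³`. -/
def w2 (r s : Fin 3 → F) : Fin 3 → F :=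
  ![r 1 * s 2, -(r 0 * s 0) - r 2 * s 1, -(r 0 * s 1) - r 2 * s 0]

/-- The formula for `σ_{i,i+4}(r,s)` on `W = F³`. -/
def w4 (r s : Fin 3 → F) : Fin 3 → F :=
  ![-(r 0 * s 1) - r 1 * s 2, r 2 * s 0, -(r 0 * s 2) - r 1 * s 1]

/-- The twist `σ : G × G → Bil(W × W, W)`, `W = F³`. -/
def sigma3 (i j : Fin 8) (r s : Fin 3 → F) : Fin 3 → F :=
  if i = 0 ∨ j = 0 ∨ i = j then 0
  else if ((j : ℕ) + 7 - (i : ℕ)) % 7 = 1 then w1 F r s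
  else if ((j : ℕ) + 7 - (i : ℕ)) % 7 = 2 then w2 F r s
  else if ((j : ℕ) + 7 - (i : ℕ)) % 7 = 3 then -w4 F s r
  else if ((j : ℕ) + 7 - (i : ℕ)) % 7 = 4 then w4 F r s
  else if ((j : ℕ) + 7 - (i : ℕ)) % 7 = 5 then -w2 F s r
  else -w1 F s r

/-- `single3 i r` is the formal sum `r gᵢ` in `W^σ[G]`, viewed as a function `G → W`. -/
def single3 (i : Fin 8) (r : Fin 3 → F) : Fin 8 → Fin 3 → F :=
  fun k => if k = i then r else 0

/-- The product of `W^σ[G]`: the unique bilinear extension of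
`[r gᵢ, s gⱼ] = σ_{i,j}(r,s) g_{i*j}`. -/
def bracket3 (x y : Fin 8 → Fin 3 → F) : Fin 8 → Fin 3 → F :=
  fun k => ∑ i : Fin 8, ∑ j : Fin 8, if star i j = k then sigma3 F i j (x i) (y j) else 0

/-- The subspace `S = {(a₁,a₂,a₃) : a₁ + a₂ + a₃ = 0}` of `W = F³`. -/
def Sset : Set (Fin 3 → F) := {r | r 0 + r 1 + r 2 = 0}

/-- The Lie subalgebra `S^σ[G] = span{r g : r ∈ S, g ∈ G}` of `W^σ[G]`. -/
def SG : Submodule F (Fin 8 → Fin 3 → F) :=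
  Submodule.span F {z : Fin 8 → Fin 3 → F | ∃ i : Fin 8, ∃ r ∈ Sset F, z = single3 F i r}

/-- `Sg₀ = {r g₀ : r ∈ S}`. -/
def SG0 : Submodule F (Fin 8 → Fin 3 → F) :=
  Submodule.span F {z : Fin 8 → Fin 3 → F | ∃ r ∈ Sset F, z = single3 F 0 r}

/-- `S^σ[G^×] = span{r gᵢ : r ∈ S, i ∈ I}`. -/
def SGx : Submodule F (Fin 8 → Fin 3 → F) :=
  Submodule.span F
    {z : Fin 8 → Fin 3 → F | ∃ i : Fin 8, i ≠ 0 ∧ ∃ r ∈ Sset F, z = single3 F i r}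

section General

variable {ι K V : Type*} [Fintype ι] [DecidableEq ι] [Field K] [AddCommGroup V] [Module K V]

theorem mem_span_single_iff (P : ι → Prop) (p : Submodule K V) (x : ι → V) :
    x ∈ Submodule.span K {z | ∃ i, P i ∧ ∃ r ∈ p, z = Pi.single i r} ↔
      ∀ i, x i ∈ p ∧ (¬ P i → x i = 0) := by
  constructor
  · intro hx
    induction hx using Submodule.span_induction with
    | mem z hz =>
      obtain ⟨i, hi, r, hr, rfl⟩ := hz
      intro j
      rcases eq_or_ne j i with rfl | hji
      · simpa [hi] using hr
      · simp [hji]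
    | zero => simp
    | add a b _ _ ha hb =>
      intro i
      exact ⟨add_mem (ha i).1 (hb i).1, fun hi => by simp [(ha i).2 hi, (hb i).2 hi]⟩
    | smul c a _ ha =>
      intro i
      exact ⟨p.smul_mem c (ha i).1, fun hi => by simp [(ha i).2 hi]⟩
  · intro hx
    rw [← Finset.univ_sum_single x]
    refine Submodule.sum_mem _ fun i _ => ?_
    by_cases hi : P i
    · exact Submodule.subset_span ⟨i, hi, x i, (hx i).1, rfl⟩
    · simp [(hx i).2 hi]

theorem finrank_span_single (P : ι → Prop) [DecidablePred P] (p : Submodule K V)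
    [FiniteDimensional K p] :
    Module.finrank K (Submodule.span K {z | ∃ i, P i ∧ ∃ r ∈ p, z = Pi.single i r}) =
      Fintype.card {i // P i} * Module.finrank K p := by
  let L : ({i // P i} → p) →ₗ[K] ι → V :=
    { toFun := fun f i => if h : P i then (f ⟨i, h⟩ : V) else 0
      map_add' := fun f g => by ext i; by_cases h : P i <;> simp [h]
      map_smul' := fun c f => by ext i; by_cases h : P i <;> simp [h] }
  have hL : Function.Injective L := by
    intro f g hfg
    ext ⟨i, hi⟩
    simpa [L, hi] using congrFun hfg i
  have hrange :
      LinearMap.range L = Submodule.span K {z | ∃ i, P i ∧ ∃ r ∈ p, z = Pi.single i r} := by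
    ext x
    rw [mem_span_single_iff]
    constructor
    · rintro ⟨f, rfl⟩ i
      by_cases hi : P i <;> simp [L, hi]
    · intro hx
      refine ⟨fun i => ⟨x i, (hx i).1⟩, funext fun i => ?_⟩
      by_cases hi : P i
      · simp [L, hi]
      · simp [L, hi, (hx i).2 hi]
  rw [← hrange, LinearMap.finrank_range_of_inj hL, Module.finrank_pi_fintype]
  simp

end General

def starTable : Fin 8 → Fin 8 → Fin 8 :=
  ![![0, 1, 2, 3, 4, 5, 6, 7],
    ![1, 0, 4, 7, 2, 6, 5, 3],
    ![2, 4, 0, 5, 1, 3, 7, 6],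
    ![3, 7, 5, 0, 6, 2, 4, 1],
    ![4, 2, 1, 6, 0, 7, 3, 5],
    ![5, 6, 3, 2, 7, 0, 1, 4],
    ![6, 5, 7, 4, 3, 1, 0, 2],
    ![7, 3, 6, 1, 5, 4, 2, 0]]

theorem star_eq_starTable : star = starTable := by
  have lab_injective : Function.Injective lab := by decide
  have lab_starTable : ∀ i j, lab (starTable i j) = lab i + lab j := by decide
  funext i j
  exact lab_injective <|
    (Function.invFun_eq ⟨starTable i j, lab_starTable i j⟩).trans (lab_starTable i j).symm

theorem star_comm (i j : Fin 8) : star i j = star j i := by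
  revert i j; rw [star_eq_starTable]; decide

theorem star_star (i j : Fin 8) : star i (star i j) = j := by
  revert i j; rw [star_eq_starTable]; decide

theorem star_zero (i : Fin 8) : star i 0 = i := by
  revert i; rw [star_eq_starTable]; decide

theorem star_eq_iff {i j k : Fin 8} : star i j = k ↔ j = star i k :=
  ⟨fun h => h ▸ (star_star i j).symm, fun h => h ▸ star_star i k⟩

theorem star_eq_zero_iff {i j : Fin 8} : star i j = 0 ↔ i = j := by
  rw [star_eq_iff, star_zero, eq_comm]

theorem star_self (i : Fin 8) : star i i = 0 := star_eq_zero_iff.2 rfl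

def offset (i j : Fin 8) : ℕ := ((j : ℕ) + 7 - (i : ℕ)) % 7

theorem offset_self (i : Fin 8) : offset i i = 0 := by simp [offset]

theorem offset_mem_Icc {i j : Fin 8} (hi : i ≠ 0) (hj : j ≠ 0) (hij : i ≠ j) :
    offset i j ∈ Finset.Icc 1 6 := by
  have hi' : (i : ℕ) ≠ 0 := fun h => hi (Fin.ext h)
  have hj' : (j : ℕ) ≠ 0 := fun h => hj (Fin.ext h)
  have hij' : (i : ℕ) ≠ j := fun h => hij (Fin.ext h)
  simp only [offset, Finset.mem_Icc]
  omega

-- `g_k + g_{k+d} = g_{k + partner d}`: the lines of the Fano plane on `I` are `{i, i+1, i+3}`.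
def partner : ℕ → ℕ
  | 1 => 3 | 2 => 6 | 3 => 1 | 4 => 5 | 5 => 4 | _ => 2

theorem offset_star : ∀ k c : Fin 8, k ≠ 0 → c ≠ 0 → k ≠ c →
    offset k (star k c) = partner (offset k c) := by
  rw [star_eq_starTable]; decide

theorem exists_offset_eq : ∀ i : Fin 8, i ≠ 0 → ∀ d ∈ Finset.Icc 1 6,
    ∃ j : Fin 8, j ≠ 0 ∧ offset j i = d := by
  decide

theorem exists_offset_eq_one : ∀ i : Fin 8, i ≠ 0 → ∃ j : Fin 8, j ≠ 0 ∧ offset i j = 1 := by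
  decide

def coordSum : (Fin 3 → F) →ₗ[F] F where
  toFun r := r 0 + r 1 + r 2
  map_add' r s := by simp only [Pi.add_apply]; ring
  map_smul' c r := by simp only [Pi.smul_apply, smul_eq_mul, RingHom.id_apply]; ring

def Sspace : Submodule F (Fin 3 → F) := LinearMap.ker (coordSum F)

section Subspaces

variable {F}

theorem mem_Sspace {r : Fin 3 → F} : r ∈ Sspace F ↔ r ∈ Sset F := Iff.rfl

theorem mem_Sspace_iff {r : Fin 3 → F} : r ∈ Sspace F ↔ r 0 + r 1 + r 2 = 0 := Iff.rfl

theorem finrank_Sspace : Module.finrank F (Sspace F) = 2 := by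
  have hrange : LinearMap.range (coordSum F) = ⊤ :=
    LinearMap.range_eq_top.2 fun c => ⟨Pi.single 0 c, by simp [coordSum]⟩
  have := LinearMap.finrank_range_add_finrank_ker (coordSum F)
  rw [hrange, finrank_top] at this
  simp only [Module.finrank_self, Module.finrank_fin_fun] at this
  rw [Sspace]
  omega

theorem single3_eq_pi_single (i : Fin 8) (r : Fin 3 → F) : single3 F i r = Pi.single i r := by
  ext k; simp [single3, Pi.single_apply]

theorem SG_eq_span_single :
    SG F = Submodule.span F {z | ∃ i : Fin 8, True ∧ ∃ r ∈ Sspace F, z = Pi.single i r} := by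
  simp [SG, single3_eq_pi_single, mem_Sspace]

theorem SG0_eq_span_single :
    SG0 F = Submodule.span F {z | ∃ i : Fin 8, i = 0 ∧ ∃ r ∈ Sspace F, z = Pi.single i r} := by
  simp [SG0, single3_eq_pi_single, mem_Sspace]

theorem SGx_eq_span_single :
    SGx F = Submodule.span F {z | ∃ i : Fin 8, i ≠ 0 ∧ ∃ r ∈ Sspace F, z = Pi.single i r} := by
  simp [SGx, single3_eq_pi_single, mem_Sspace]

theorem single_mem_SG (i : Fin 8) {r : Fin 3 → F} (hr : r ∈ Sspace F) :
    Pi.single i r ∈ SG F := by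
  rw [SG_eq_span_single]
  exact Submodule.subset_span ⟨i, trivial, r, hr, rfl⟩

theorem single_mem_SGx {i : Fin 8} (hi : i ≠ 0) {r : Fin 3 → F} (hr : r ∈ Sspace F) :
    Pi.single i r ∈ SGx F := by
  rw [SGx_eq_span_single]
  exact Submodule.subset_span ⟨i, hi, r, hr, rfl⟩

theorem mem_SG_iff {x : Fin 8 → Fin 3 → F} : x ∈ SG F ↔ ∀ i, x i ∈ Sspace F := by
  rw [SG_eq_span_single, mem_span_single_iff]
  simp only [not_true_eq_false, IsEmpty.forall_iff, and_true]

theorem mem_SG0_iff {x : Fin 8 → Fin 3 → F} : x ∈ SG0 F ↔ x 0 ∈ Sspace F ∧ ∀ i ≠ 0, x i = 0 := by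
  rw [SG0_eq_span_single, mem_span_single_iff]
  constructor
  · intro h
    exact ⟨(h 0).1, fun i hi => (h i).2 hi⟩
  · rintro ⟨h0, h⟩ i
    by_cases hi : i = 0
    · subst hi
      exact ⟨h0, fun h' => (h' rfl).elim⟩
    · rw [h i hi]; exact ⟨zero_mem _, fun _ => rfl⟩

theorem mem_SGx_iff {x : Fin 8 → Fin 3 → F} : x ∈ SGx F ↔ x 0 = 0 ∧ ∀ i, x i ∈ Sspace F := by
  rw [SGx_eq_span_single, mem_span_single_iff]
  simp only [not_not, forall_and, forall_eq]
  tauto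

theorem finrank_SG0 : Module.finrank F (SG0 F) = 2 := by
  rw [SG0_eq_span_single, finrank_span_single, finrank_Sspace]
  simp

theorem finrank_SGx : Module.finrank F (SGx F) = 14 := by
  rw [SGx_eq_span_single, finrank_span_single, finrank_Sspace]
  simp

end Subspaces

def twist (d : ℕ) (r s : Fin 3 → F) : Fin 3 → F :=
  match d with
  | 1 => w1 F r s
  | 2 => w2 F r s
  | 3 => -w4 F s r
  | 4 => w4 F r s
  | 5 => -w2 F s r
  | _ => -w1 F s r

section Twist

variable {F}

theorem sigma3_eq_twist {i j : Fin 8} (hi : i ≠ 0) (hj : j ≠ 0) (hij : i ≠ j)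
    (r s : Fin 3 → F) : sigma3 F i j r s = twist F (offset i j) r s := by
  have hd := offset_mem_Icc hi hj hij
  generalize hd_eq : offset i j = d at hd
  simp only [offset] at hd_eq
  obtain ⟨hd1, hd6⟩ := Finset.mem_Icc.1 hd
  simp only [sigma3, hi, hj, hij, or_self, if_false, hd_eq]
  interval_cases d <;> rfl

theorem sigma3_zero_idx_left (j : Fin 8) (r s : Fin 3 → F) : sigma3 F 0 j r s = 0 := by
  simp [sigma3]

theorem sigma3_zero_idx_right (i : Fin 8) (r s : Fin 3 → F) : sigma3 F i 0 r s = 0 := by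
  simp [sigma3]

theorem sigma3_self (i : Fin 8) (r s : Fin 3 → F) : sigma3 F i i r s = 0 := by
  simp [sigma3]

theorem sigma3_zero_left (i j : Fin 8) (s : Fin 3 → F) : sigma3 F i j 0 s = 0 := by
  unfold sigma3 w1 w2 w4
  split_ifs <;> ext m <;> fin_cases m <;> simp

theorem sigma3_zero_right (i j : Fin 8) (r : Fin 3 → F) : sigma3 F i j r 0 = 0 := by
  unfold sigma3 w1 w2 w4
  split_ifs <;> ext m <;> fin_cases m <;> simp

variable {r s : Fin 3 → F}

theorem w1_mem (hr : r ∈ Sspace F) (hs : s ∈ Sspace F) : w1 F r s ∈ Sspace F := by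
  simp only [mem_Sspace_iff, w1, Matrix.cons_val_zero, Matrix.cons_val_one, Matrix.cons_val_two,
    Matrix.head_cons, Matrix.tail_cons] at hr hs ⊢
  linear_combination (-(s 0 + s 2)) * hr + r 0 * hs

theorem w2_mem (hr : r ∈ Sspace F) (hs : s ∈ Sspace F) : w2 F r s ∈ Sspace F := by
  simp only [mem_Sspace_iff, w2, Matrix.cons_val_zero, Matrix.cons_val_one, Matrix.cons_val_two,
    Matrix.head_cons, Matrix.tail_cons] at hr hs ⊢
  linear_combination (-(s 0 + s 1)) * hr + r 1 * hs

theorem w4_mem (hr : r ∈ Sspace F) (hs : s ∈ Sspace F) : w4 F r s ∈ Sspace F := by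
  simp only [mem_Sspace_iff, w4, Matrix.cons_val_zero, Matrix.cons_val_one, Matrix.cons_val_two,
    Matrix.head_cons, Matrix.tail_cons] at hr hs ⊢
  linear_combination (-(s 1 + s 2)) * hr + r 2 * hs

theorem twist_mem (hr : r ∈ Sspace F) (hs : s ∈ Sspace F) (d : ℕ) :
    twist F d r s ∈ Sspace F := by
  rcases d with _ | _ | _ | _ | _ | _ | d
  · exact neg_mem (w1_mem hs hr)
  · exact w1_mem hr hs
  · exact w2_mem hr hs
  · exact neg_mem (w4_mem hs hr)
  · exact w4_mem hr hs
  · exact neg_mem (w2_mem hs hr)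
  · exact neg_mem (w1_mem hs hr)

theorem sigma3_mem (hr : r ∈ Sspace F) (hs : s ∈ Sspace F) (i j : Fin 8) :
    sigma3 F i j r s ∈ Sspace F := by
  by_cases h : i = 0 ∨ j = 0 ∨ i = j
  · simp [sigma3, h, zero_mem]
  · push Not at h
    rw [sigma3_eq_twist h.1 h.2.1 h.2.2]
    exact twist_mem hr hs _

end Twist

section Bracket

variable {F}

theorem bracket3_apply (x y : Fin 8 → Fin 3 → F) (k : Fin 8) :
    bracket3 F x y k = ∑ i, sigma3 F i (star i k) (x i) (y (star i k)) := by
  simp only [bracket3, star_eq_iff, Finset.sum_ite_eq', Finset.mem_univ, if_true]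

theorem bracket3_single_left (k : Fin 8) (s : Fin 3 → F) (z : Fin 8 → Fin 3 → F) (c : Fin 8) :
    bracket3 F (Pi.single k s) z c = sigma3 F k (star k c) s (z (star k c)) := by
  rw [bracket3_apply, Finset.sum_eq_single k (fun i _ hik => ?_) (by simp)]
  · simp
  · simp [hik, sigma3_zero_left]

theorem bracket3_single_right (z : Fin 8 → Fin 3 → F) (j : Fin 8) (s : Fin 3 → F) (c : Fin 8) :
    bracket3 F z (Pi.single j s) c = sigma3 F (star c j) j (z (star c j)) s := by
  have hstar : ∀ i, star i c = j ↔ i = star c j := fun i => by rw [star_comm, star_eq_iff]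
  rw [bracket3_apply, Finset.sum_eq_single (star c j) (fun i _ hij => ?_) (by simp)]
  · rw [(hstar _).2 rfl, Pi.single_eq_same]
  · rw [Pi.single_eq_of_ne (fun h => hij ((hstar i).1 h)), sigma3_zero_right]

theorem bracket3_single_single (i j : Fin 8) (r s : Fin 3 → F) :
    bracket3 F (Pi.single i r) (Pi.single j s) = Pi.single (star i j) (sigma3 F i j r s) := by
  ext1 c
  rw [bracket3_single_left]
  by_cases hc : c = star i j
  · rw [hc, star_star, Pi.single_eq_same, Pi.single_eq_same]
  · rw [Pi.single_eq_of_ne (fun h => hc (star_eq_iff.1 h)), Pi.single_eq_of_ne hc,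
      sigma3_zero_right]

end Bracket

def ve : Fin 3 → F := ![1, -1, 0]

def vf : Fin 3 → F := ![0, 1, -1]

section Structure

variable {F}

theorem ve_mem : ve F ∈ Sspace F := by simp [mem_Sspace_iff, ve]

theorem vf_mem : vf F ∈ Sspace F := by simp [mem_Sspace_iff, vf]

theorem disjoint_SG0_SGx : Disjoint (SG0 F) (SGx F) := by
  rw [Submodule.disjoint_def]
  intro x hx0 hxx
  ext1 k
  by_cases hk : k = 0
  · rw [hk, (mem_SGx_iff.1 hxx).1, Pi.zero_apply]
  · rw [(mem_SG0_iff.1 hx0).2 k hk, Pi.zero_apply]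

theorem SG0_le_SG : SG0 F ≤ SG F := fun x hx => by
  rw [mem_SG0_iff] at hx
  refine mem_SG_iff.2 fun i => ?_
  by_cases hi : i = 0
  · exact hi ▸ hx.1
  · exact hx.2 i hi ▸ zero_mem _

theorem SG0_sup_SGx : SG0 F ⊔ SGx F = SG F := by
  refine le_antisymm (sup_le SG0_le_SG fun x hx => mem_SG_iff.2 (mem_SGx_iff.1 hx).2) ?_
  intro x hx
  have hx := mem_SG_iff.1 hx
  refine Submodule.mem_sup.2 ⟨Pi.single 0 (x 0), ?_, x - Pi.single 0 (x 0), ?_, add_sub_cancel _ _⟩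
  · refine mem_SG0_iff.2 ⟨by simpa using hx 0, fun i hi => by simp [hi]⟩
  · refine mem_SGx_iff.2 ⟨by simp, fun i => ?_⟩
    by_cases hi : i = 0
    · simp [hi, zero_mem]
    · simpa [hi] using hx i

theorem bracket3_eq_zero_of_mem_SG0 {x : Fin 8 → Fin 3 → F} (hx : x ∈ SG0 F)
    (y : Fin 8 → Fin 3 → F) : bracket3 F x y = 0 := by
  ext1 c
  rw [bracket3_apply]
  refine Finset.sum_eq_zero fun i _ => ?_
  by_cases hi : i = 0
  · rw [hi, sigma3_zero_idx_left]
  · rw [(mem_SG0_iff.1 hx).2 i hi, sigma3_zero_left]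

theorem mem_SG0_of_forall_bracket3_eq_zero {x : Fin 8 → Fin 3 → F} (hx : x ∈ SG F)
    (hcen : ∀ y ∈ SG F, bracket3 F x y = 0) : x ∈ SG0 F := by
  refine mem_SG0_iff.2 ⟨mem_SG_iff.1 hx 0, fun k hk => ?_⟩
  obtain ⟨j, hj, hoff⟩ := exists_offset_eq_one k hk
  have hkj : k ≠ j := by
    rintro rfl
    simp [offset_self] at hoff
  have h := congrFun (hcen _ (single_mem_SG j ve_mem)) (star k j)
  rw [bracket3_single_right, star_comm (star k j), star_comm k j, star_star,
    sigma3_eq_twist hk hj hkj, hoff, Pi.zero_apply] at h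
  ext m; fin_cases m
  · simpa [twist, w1, ve] using congrFun h 2
  · simpa [twist, w1, ve] using congrFun h 0
  · simpa [twist, w1, ve] using congrFun h 1

theorem center_SG_eq_SG0 :
    {x : Fin 8 → Fin 3 → F | x ∈ SG F ∧ ∀ y ∈ SG F, bracket3 F x y = 0} = ↑(SG0 F) := by
  ext x
  exact ⟨fun h => mem_SG0_of_forall_bracket3_eq_zero h.1 h.2,
    fun h => ⟨SG0_le_SG h, fun y _ => bracket3_eq_zero_of_mem_SG0 h y⟩⟩

theorem bracket3_mem_SGx {x y : Fin 8 → Fin 3 → F} (hx : x ∈ SGx F) (hy : y ∈ SGx F) :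
    bracket3 F x y ∈ SGx F := by
  rw [mem_SGx_iff] at hx hy ⊢
  refine ⟨?_, fun k => ?_⟩
  · simp [bracket3_apply, star_zero, sigma3_self]
  · rw [bracket3_apply]
    exact Submodule.sum_mem _ fun i _ => sigma3_mem (hx.2 i) (hy.2 _) _ _

theorem bracket3_single_ve_ne_zero :
    bracket3 F (Pi.single 1 (ve F)) (Pi.single 2 (ve F)) ≠ 0 := by
  rw [bracket3_single_single, sigma3_eq_twist (by decide) (by decide) (by decide), Ne,
    Pi.single_eq_zero_iff]
  intro h
  simpa [twist, offset, w1, ve] using congrFun h 0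

end Structure

def adVe (k : Fin 8) (z : Fin 8 → Fin 3 → F) : Fin 8 → Fin 3 → F :=
  bracket3 F (Pi.single k (ve F)) z

def quarticAd (k : Fin 8) (z : Fin 8 → Fin 3 → F) : Fin 8 → Fin 3 → F :=
  adVe F k (adVe F k (adVe F k (adVe F k z))) + (4 : F) • adVe F k (adVe F k z)

def adVeSq (d : ℕ) (u : Fin 3 → F) : Fin 3 → F :=
  twist F (partner d) (ve F) (twist F d (ve F) u)

abbrev Survives (k c : Fin 8) : Prop :=
  c ≠ 0 ∧ c ≠ k ∧ offset k c ≠ 4 ∧ offset k c ≠ 5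

-- `i ↦ i - 1` on `I`
def pred7 : Fin 8 → Fin 8 := ![0, 7, 1, 2, 3, 4, 5, 6]

theorem pred7_ne_zero : ∀ i : Fin 8, i ≠ 0 → pred7 i ≠ 0 := by decide

theorem survives_pred7_iff : ∀ i : Fin 8, i ≠ 0 → ∀ c : Fin 8,
    Survives (pred7 i) c ∧ Survives (pred7 (pred7 i)) c ∧
      Survives (pred7 (pred7 (pred7 i))) c ↔ c = i := by
  decide

section Simplicity

variable {F}

theorem adVe_adVe_apply {k : Fin 8} (hk : k ≠ 0) (z : Fin 8 → Fin 3 → F) (c : Fin 8) :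
    adVe F k (adVe F k z) c = if c = 0 ∨ c = k then 0 else adVeSq F (offset k c) (z c) := by
  simp only [adVe, bracket3_single_left, star_star]
  by_cases hc0 : c = 0
  · simp [hc0, star_zero, sigma3_self]
  by_cases hck : c = k
  · simp [hck, star_self, sigma3_zero_idx_right]
  have hkc : k ≠ c := Ne.symm hck
  have hs0 : star k c ≠ 0 := fun h => hkc (star_eq_zero_iff.1 h)
  have hsk : k ≠ star k c := fun h => hc0 (by rw [star_eq_iff.1 h.symm, star_self])
  rw [if_neg (by tauto), sigma3_eq_twist hk hc0 hkc, sigma3_eq_twist hk hs0 hsk,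
    offset_star k c hk hc0 hkc, adVeSq]

theorem adVeSq_adVeSq {d : ℕ} (hd : d ∈ Finset.Icc 1 6) (u : Fin 3 → F) :
    adVeSq F d (adVeSq F d u) + (4 : F) • adVeSq F d u =
      if d = 4 ∨ d = 5 then 0 else (-3 : F) • u := by
  obtain ⟨hd1, hd6⟩ := Finset.mem_Icc.1 hd
  interval_cases d <;> ext m <;> fin_cases m <;>
    simp [adVeSq, twist, partner, w1, w2, w4, ve] <;> ring

theorem quarticAd_apply {k : Fin 8} (hk : k ≠ 0) (z : Fin 8 → Fin 3 → F) (c : Fin 8) :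
    quarticAd F k z c = if Survives k c then (-3 : F) • z c else 0 := by
  simp only [quarticAd, Pi.add_apply, Pi.smul_apply, adVe_adVe_apply hk]
  by_cases hc : c = 0 ∨ c = k
  · have : ¬ Survives k c := by tauto
    simp [hc, this]
  · push Not at hc
    rw [if_neg (by tauto), if_neg (by tauto),
      adVeSq_adVeSq (offset_mem_Icc hk hc.1 (Ne.symm hc.2))]
    simp only [Survives, hc, ne_eq, not_false_eq_true, true_and, ← not_or]
    split_ifs <;> rfl

theorem quarticAd_pred7 {i : Fin 8} (hi : i ≠ 0) (z : Fin 8 → Fin 3 → F) :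
    quarticAd F (pred7 (pred7 (pred7 i)))
        (quarticAd F (pred7 (pred7 i)) (quarticAd F (pred7 i) z)) =
      Pi.single i ((-27 : F) • z i) := by
  have h1 := pred7_ne_zero i hi
  have h2 := pred7_ne_zero _ h1
  have h3 := pred7_ne_zero _ h2
  ext1 c
  have hsurv := survives_pred7_iff i hi c
  simp only [quarticAd_apply h1, quarticAd_apply h2, quarticAd_apply h3, Pi.single_apply]
  split_ifs <;> simp_all [smul_smul]
  norm_num

theorem twist_surjective {d : ℕ} (hd : d ∈ Finset.Icc 1 6) {v : Fin 3 → F}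
    (hv : v ∈ Sspace F) : ∃ u ∈ Sspace F, ∃ s ∈ Sspace F, twist F d u s = v := by
  rw [mem_Sspace_iff] at hv
  obtain ⟨hd1, hd6⟩ := Finset.mem_Icc.1 hd
  interval_cases d
  · exact ⟨ve F, ve_mem, ![v 0, v 2, v 1], by simp [mem_Sspace_iff]; linear_combination hv,
      by ext m; fin_cases m <;> simp [twist, w1, ve]⟩
  · exact ⟨vf F, vf_mem, ![v 2, v 1, v 0], by simp [mem_Sspace_iff]; linear_combination hv,
      by ext m; fin_cases m <;> simp [twist, w2, vf]⟩
  · exact ⟨ve F, ve_mem, ![-v 0, -v 2, -v 1], by simp [mem_Sspace_iff]; linear_combination -hv,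
      by ext m; fin_cases m <;> simp [twist, w4, ve]⟩
  · exact ⟨vf F, vf_mem, ![-v 1, -v 2, -v 0], by simp [mem_Sspace_iff]; linear_combination -hv,
      by ext m; fin_cases m <;> simp [twist, w4, vf]⟩
  · exact ⟨vf F, vf_mem, ![v 2, v 0, v 1], by simp [mem_Sspace_iff]; linear_combination hv,
      by ext m; fin_cases m <;> simp [twist, w2, vf]⟩
  · exact ⟨ve F, ve_mem, ![v 2, v 0, v 1], by simp [mem_Sspace_iff]; linear_combination hv,
      by ext m; fin_cases m <;> simp [twist, w1, ve]⟩

-- The scales are, up to sign, the determinants of `s ↦ twist F d s r` on `S` (`d = 1, 4`),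
-- and the witnesses `s` come from the adjugates.
theorem exists_twist_one_left_eq_smul {r : Fin 3 → F} (hr : r ∈ Sspace F) {v : Fin 3 → F}
    (hv : v ∈ Sspace F) : ∃ s ∈ Sspace F, twist F 1 s r = (r 1 * (2 * r 0 + r 1)) • v := by
  rw [mem_Sspace_iff] at hr hv
  refine ⟨![v 2 * (2 * r 0 + r 1), v 1 * r 1 - r 0 * v 2,
    -(v 2 * (2 * r 0 + r 1)) - (v 1 * r 1 - r 0 * v 2)], by simp [mem_Sspace_iff], ?_⟩
  ext m; fin_cases m <;> simp [twist, w1]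
  · linear_combination (r 0 * v 2 + r 1 * v 2 + r 1 * v 1) * hr +
      (-2 * r 0 * r 1 - r 1 * r 1) * hv
  · linear_combination (-(r 1 * v 1) + r 0 * v 2) * hr
  · ring

theorem exists_twist_four_left_eq_smul {r : Fin 3 → F} (hr : r ∈ Sspace F) {v : Fin 3 → F}
    (hv : v ∈ Sspace F) : ∃ s ∈ Sspace F, twist F 4 s r = (r 0 * (r 0 + 2 * r 1)) • v := by
  rw [mem_Sspace_iff] at hr hv
  refine ⟨![-(v 0 * r 0 + v 1 * (r 0 + r 1)),
    v 0 * r 0 + v 1 * (r 0 + r 1) - v 1 * (r 0 + 2 * r 1), v 1 * (r 0 + 2 * r 1)],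
    by simp [mem_Sspace_iff]; ring, ?_⟩
  ext m; fin_cases m <;> simp [twist, w4]
  · linear_combination (-(r 0 * v 0) + r 1 * v 1) * hr
  · ring
  · linear_combination (r 0 * v 0 + r 0 * v 1 + r 1 * v 1) * hr +
      (-(r 0 * r 0) - 2 * r 0 * r 1) * hv

theorem eq_zero_of_twist_scales_eq_zero (h3 : (3 : F) ≠ 0) {r : Fin 3 → F} (hr : r ∈ Sspace F)
    (h1 : r 1 * (2 * r 0 + r 1) = 0) (h4 : r 0 * (r 0 + 2 * r 1) = 0) : r = 0 := by
  rw [mem_Sspace_iff] at hr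
  have h01 : r 0 = 0 ∧ r 1 = 0 := by
    rcases mul_eq_zero.1 h1 with h1 | h1 <;> rcases mul_eq_zero.1 h4 with h4 | h4
    · exact ⟨h4, h1⟩
    · exact ⟨by linear_combination h4 - 2 * h1, h1⟩
    · exact ⟨h4, by linear_combination h1 - 2 * h4⟩
    · have h0 : r 0 = 0 := (mul_eq_zero.1 (by linear_combination 2 * h1 - h4 :
        (3 : F) * r 0 = 0)).resolve_left h3
      exact ⟨h0, by linear_combination h1 - 2 * h0⟩
  ext m; fin_cases m
  · exact h01.1
  · exact h01.2
  · simp only [Fin.reduceFinMk, Pi.zero_apply]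
    linear_combination hr - h01.1 - h01.2

theorem exists_twist_left_eq_smul (h3 : (3 : F) ≠ 0) {r : Fin 3 → F} (hr : r ∈ Sspace F)
    (hr0 : r ≠ 0) : ∃ d ∈ Finset.Icc 1 6, ∃ c : F, c ≠ 0 ∧
      ∀ v ∈ Sspace F, ∃ s ∈ Sspace F, twist F d s r = c • v := by
  by_cases h1 : r 1 * (2 * r 0 + r 1) = 0
  · by_cases h4 : r 0 * (r 0 + 2 * r 1) = 0
    · exact absurd (eq_zero_of_twist_scales_eq_zero h3 hr h1 h4) hr0
    · exact ⟨4, by simp, _, h4, fun v hv => exists_twist_four_left_eq_smul hr hv⟩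
  · exact ⟨1, by simp, _, h1, fun v hv => exists_twist_one_left_eq_smul hr hv⟩

variable {J : Submodule F (Fin 8 → Fin 3 → F)}

theorem quarticAd_mem (hJ : ∀ x ∈ SGx F, ∀ y ∈ J, bracket3 F x y ∈ J) {k : Fin 8}
    (hk : k ≠ 0) {z : Fin 8 → Fin 3 → F} (hz : z ∈ J) : quarticAd F k z ∈ J := by
  have had : ∀ w ∈ J, adVe F k w ∈ J := fun w hw => hJ _ (single_mem_SGx hk ve_mem) w hw
  exact add_mem (had _ (had _ (had _ (had _ hz)))) (J.smul_mem _ (had _ (had _ hz)))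

theorem exists_forall_single_mem (hJ : ∀ x ∈ SGx F, ∀ y ∈ J, bracket3 F x y ∈ J)
    (h3 : (3 : F) ≠ 0) {i : Fin 8} (hi : i ≠ 0) {r : Fin 3 → F} (hr : r ∈ Sspace F)
    (hr0 : r ≠ 0) (hrJ : Pi.single i r ∈ J) :
    ∃ t ≠ 0, ∀ v ∈ Sspace F, Pi.single t v ∈ J := by
  obtain ⟨d, hd, c, hc, hsurj⟩ := exists_twist_left_eq_smul h3 hr hr0
  obtain ⟨j, hj, hji⟩ := exists_offset_eq i hi d hd
  have hji' : j ≠ i := by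
    rintro rfl
    simp [offset_self, ← hji] at hd
  refine ⟨star j i, fun h => hji' (star_eq_zero_iff.1 h), fun v hv => ?_⟩
  obtain ⟨s, hs, hsr⟩ := hsurj v hv
  have h := hJ _ (single_mem_SGx hj hs) _ hrJ
  rw [bracket3_single_single, sigma3_eq_twist hj hi hji', hji, hsr, Pi.single_smul] at h
  exact (J.smul_mem_iff hc).1 h

theorem single_mem_of_forall_single_mem (hJ : ∀ x ∈ SGx F, ∀ y ∈ J, bracket3 F x y ∈ J)
    {t t' : Fin 8} (ht : t ≠ 0) (ht' : t' ≠ 0) (hfull : ∀ v ∈ Sspace F, Pi.single t v ∈ J)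
    {v : Fin 3 → F} (hv : v ∈ Sspace F) : Pi.single t' v ∈ J := by
  by_cases htt : t = t'
  · exact htt ▸ hfull v hv
  have hj : star t t' ≠ 0 := fun h => htt (star_eq_zero_iff.1 h)
  have hjt : star t t' ≠ t := fun h => ht' (by rw [star_eq_iff.1 h, star_self])
  obtain ⟨u, hu, s, hs, hus⟩ := twist_surjective (offset_mem_Icc hj ht hjt) hv
  have h := hJ _ (single_mem_SGx hj hu) _ (hfull s hs)
  rwa [bracket3_single_single, sigma3_eq_twist hj ht hjt, hus, star_comm, star_star] at h

theorem eq_bot_or_eq_SGx (hJ : ∀ x ∈ SGx F, ∀ y ∈ J, bracket3 F x y ∈ J)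
    (h3 : (3 : F) ≠ 0) (hle : J ≤ SGx F) : J = ⊥ ∨ J = SGx F := by
  refine or_iff_not_imp_left.2 fun hbot => le_antisymm hle ?_
  obtain ⟨z, hzJ, hz0⟩ := Submodule.exists_mem_ne_zero_of_ne_bot hbot
  obtain ⟨hz0', hzS⟩ := mem_SGx_iff.1 (hle hzJ)
  obtain ⟨i, hi⟩ : ∃ i, z i ≠ 0 := by
    by_contra! h
    exact hz0 (funext h)
  have hi0 : i ≠ 0 := by
    rintro rfl
    exact hi hz0'
  have h1 := pred7_ne_zero i hi0
  have h2 := pred7_ne_zero _ h1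
  have hiso : Pi.single i ((-27 : F) • z i) ∈ J := by
    rw [← quarticAd_pred7 hi0]
    exact quarticAd_mem hJ (pred7_ne_zero _ h2) (quarticAd_mem hJ h2 (quarticAd_mem hJ h1 hzJ))
  have h27 : (-27 : F) ≠ 0 := by
    rw [show (-27 : F) = -3 ^ 3 by norm_num, neg_ne_zero]
    exact pow_ne_zero 3 h3
  obtain ⟨t, ht, hfull⟩ := exists_forall_single_mem hJ h3 hi0 ((Sspace F).smul_mem _ (hzS i))
    (smul_ne_zero h27 hi) hiso
  rw [SGx_eq_span_single, Submodule.span_le]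
  rintro _ ⟨t', ht', v, hv, rfl⟩
  exact single_mem_of_forall_single_mem hJ ht ht' hfull hv

end Simplicity

theorem g2_decomposition (h3 : (3 : F) ≠ 0) :
    Disjoint (SG0 F) (SGx F) ∧ SG0 F ⊔ SGx F = SG F ∧
    {x : Fin 8 → Fin 3 → F | x ∈ SG F ∧ ∀ y ∈ SG F, bracket3 F x y = 0} = ↑(SG0 F) ∧
    Module.finrank F ↥(SG0 F) = 2 ∧
    Module.finrank F ↥(SGx F) = 14 ∧
    (∀ x ∈ SGx F, ∀ y ∈ SGx F, bracket3 F x y ∈ SGx F) ∧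
    (∃ x ∈ SGx F, ∃ y ∈ SGx F, bracket3 F x y ≠ 0) ∧
    (∀ J : Submodule F (Fin 8 → Fin 3 → F), J ≤ SGx F →
      (∀ x ∈ SGx F, ∀ y ∈ J, bracket3 F x y ∈ J) → J = ⊥ ∨ J = SGx F) :=
  ⟨disjoint_SG0_SGx, SG0_sup_SGx, center_SG_eq_SG0, finrank_SG0, finrank_SGx,
    fun _ hx _ hy => bracket3_mem_SGx hx hy,
    ⟨_, single_mem_SGx (by decide) ve_mem, _, single_mem_SGx (by decide) ve_mem,
      bracket3_single_ve_ne_zero⟩,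
    fun _ hle hJ => eq_bot_or_eq_SGx hJ h3 hle⟩

end

end GGA
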